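/- There is no completely positive trace-preserving map Λ from density operators on a finite-dimensional Hilbert space H to density operators on H ⊗ H_aux such that Λ[ρ] is a pure state for every density operator ρ, unless Λ is constant (i.e., Λ[ρ₁] = Λ[ρ₂] for all states ρ₁, ρ₂). -/

import Mathlib

open Matrix Kronecker BigOperators
open scoped ComplexOrder

/-- Trace distance/norm with factor 1/2: `‖A‖ = ½ tr √(AᴴA)`. -/
noncomputable def trNorm {m : Type*} [Fintype m] [DecidableEq m] (A : Matrix m m ℂ) : ℝ :=
  (1 / 2) * ((let hA := Matrix.posSemidef_conjTranspose_mul_self A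
    (hA.1.eigenvectorUnitary : Matrix m m ℂ) *
      diagonal (fun i => ((Real.sqrt (hA.1.eigenvalues i) : ℝ) : ℂ)) *
      (star hA.1.eigenvectorUnitary : Matrix m m ℂ)).trace).re

/-- A density operator: positive semidefinite with unit trace. -/
def IsDensity {m : Type*} [Fintype m] (ρ : Matrix m m ℂ) : Prop :=
  ρ.PosSemidef ∧ ρ.trace = 1

/-- A pure state: a density operator that is a (rank-one) projector. -/
def IsPureState {m : Type*} [Fintype m] (ρ : Matrix m m ℂ) : Prop :=
  IsDensity ρ ∧ ρ * ρ = ρ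

/-- Completely positive trace-preserving map, via a Kraus representation. -/
def IsCPTP {m p : Type*} [Fintype m] [DecidableEq m] [Fintype p]
    (Λ : Matrix m m ℂ →ₗ[ℂ] Matrix p p ℂ) : Prop :=
  ∃ (ι : Type) (s : Finset ι) (K : ι → Matrix p m ℂ),
    (∀ ρ, Λ ρ = ∑ i ∈ s, K i * ρ * (K i)ᴴ) ∧ ∑ i ∈ s, (K i)ᴴ * K i = 1

/-- Partial trace over the second (auxiliary) tensor factor. -/
noncomputable def ptraceB {m b : Type*} [Fintype b] (ρ : Matrix (m × b) (m × b) ℂ) :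
    Matrix m m ℂ :=
  Matrix.of fun i j => ∑ k : b, ρ (i, k) (j, k)

/-- The projector `|χ⟩⟨χ|` onto the vector `χ`. -/
noncomputable def pureProj {m : Type*} (χ : m → ℂ) : Matrix m m ℂ :=
  Matrix.vecMulVec χ (star χ)

/-- `χ` lies in the range of `ρ`. -/
def inRange {m : Type*} [Fintype m] (ρ : Matrix m m ℂ) (χ : m → ℂ) : Prop :=
  ∃ v, ρ *ᵥ v = χ

/-- Worst-case distinguishability: infimum of trace distances of pure states
taken from the ranges of `ρ` and `ρ'`. -/
noncomputable def wcd {m : Type*} [Fintype m] [DecidableEq m] (ρ ρ' : Matrix m m ℂ) : ℝ :=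
  sInf { d : ℝ | ∃ χ χ' : m → ℂ, inRange ρ χ ∧ inRange ρ' χ' ∧
    star χ ⬝ᵥ χ = 1 ∧ star χ' ⬝ᵥ χ' = 1 ∧ d = trNorm (pureProj χ - pureProj χ') }

/-- The identity `(a - b)² + (a + b)² = 2(a² + b²)` turns idempotence of `a`, `b` and
`(a + b) / 2` into `(a - b)² = 0`. -/
lemma IsIdempotentElem.sub_mul_self_eq_zero_of_midpoint {𝕜 R : Type*} [Field 𝕜] [CharZero 𝕜]
    [NonUnitalRing R] [Module 𝕜 R] [IsScalarTower 𝕜 R R] [SMulCommClass 𝕜 R R] {a b : R}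
    (ha : IsIdempotentElem a) (hb : IsIdempotentElem b)
    (hmid : IsIdempotentElem ((2⁻¹ : 𝕜) • (a + b))) : (a - b) * (a - b) = 0 := by
  have hsum : (a + b) * (a + b) = (a + b) + (a + b) := by
    have h4 := congrArg ((4 : 𝕜) • ·) hmid.eq
    simp only [smul_mul_smul_comm, smul_smul] at h4
    norm_num at h4
    rw [h4]
    module
  calc (a - b) * (a - b) = (a * a + b * b) + (a * a + b * b) - (a + b) * (a + b) := by
        simp only [mul_add, add_mul, sub_mul, mul_sub]
        abel
    _ = 0 := by rw [ha.eq, hb.eq, hsum, sub_self]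

lemma Matrix.IsHermitian.eq_zero_of_mul_self_eq_zero {m R : Type*} [Fintype m] [PartialOrder R]
    [NonUnitalRing R] [StarRing R] [StarOrderedRing R] [NoZeroDivisors R] {D : Matrix m m R}
    (hD : D.IsHermitian) (h : D * D = 0) : D = 0 :=
  conjTranspose_mul_self_eq_zero.mp (hD.eq.symm ▸ h)

/-- Pure states are extreme points of the state space. -/
lemma IsPureState.eq_of_isPureState_midpoint {m : Type*} [Fintype m] {A B : Matrix m m ℂ}
    (hA : IsPureState A) (hB : IsPureState B) (hmid : IsPureState ((2⁻¹ : ℂ) • (A + B))) :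
    A = B := by
  have hsq : (A - B) * (A - B) = 0 :=
    IsIdempotentElem.sub_mul_self_eq_zero_of_midpoint (𝕜 := ℂ) hA.2 hB.2 hmid.2
  exact sub_eq_zero.mp ((hA.1.1.1.sub hB.1.1.1).eq_zero_of_mul_self_eq_zero hsq)

lemma IsDensity.midpoint {m : Type*} [Fintype m] {ρ₁ ρ₂ : Matrix m m ℂ}
    (h₁ : IsDensity ρ₁) (h₂ : IsDensity ρ₂) : IsDensity ((2⁻¹ : ℂ) • (ρ₁ + ρ₂)) := by
  refine ⟨(h₁.1.add h₂.1).smul (by norm_num [Complex.le_def]), ?_⟩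
  rw [trace_smul, trace_add, h₁.2, h₂.2]
  norm_num

theorem no_universal_pure_purifier_general {n a : Type*} [Fintype n] [Fintype a]
    (Λ : Matrix n n ℂ →ₗ[ℂ] Matrix (n × a) (n × a) ℂ)
    (hpure : ∀ ρ : Matrix n n ℂ, IsDensity ρ → IsPureState (Λ ρ)) :
    ∀ ρ₁ ρ₂ : Matrix n n ℂ, IsDensity ρ₁ → IsDensity ρ₂ → Λ ρ₁ = Λ ρ₂ := by
  intro ρ₁ ρ₂ h₁ h₂
  have hmid := hpure _ (h₁.midpoint h₂)
  rw [map_smul, map_add] at hmid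
  exact (hpure ρ₁ h₁).eq_of_isPureState_midpoint (hpure ρ₂ h₂) hmid

/-- Any CPTP map on a full matrix algebra whose output is pure
for every density operator is a constant map on density operators. -/
theorem no_universal_pure_purifier {n a : Type*} [Fintype n] [DecidableEq n] [Fintype a]
    (Λ : Matrix n n ℂ →ₗ[ℂ] Matrix (n × a) (n × a) ℂ)
    (hCPTP : IsCPTP Λ)
    (hpure : ∀ ρ : Matrix n n ℂ, IsDensity ρ → IsPureState (Λ ρ)) :
    ∀ ρ₁ ρ₂ : Matrix n n ℂ, IsDensity ρ₁ → IsDensity ρ₂ → Λ ρ₁ = Λ ρ₂ :=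
  no_universal_pure_purifier_general Λ hpure
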